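/- In bootstrap percolation on Z^2 with Bernoulli(p_c^*) initial configuration, if at time 0 there is a closed horizontal Z^2-crossing of the rectangle R(b', h+delta) (in lattice units scaled by mesh delta), then except on an event of probability at most 2K exp(-alpha (b'-b)/(4 delta)), there is a closed horizontal Z^2-crossing of R(b, h+delta) in the final bootstrapped configuration, for any b < b'. -/

import Mathlib

open MeasureTheory Filter Set

/-- Sites of the lattice `ℤ²`. -/
abbrev Site : Type := ℤ × ℤ

/-- A configuration of open (`true`, i.e. `1`) and closed (`false`, i.e. `0`) sites. -/
abbrev Config : Type := Site → Bool

/-- Nearest-neighbour adjacency in `ℤ²`. -/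
def adj (x y : Site) : Prop := (x.1 - y.1).natAbs + (x.2 - y.2).natAbs = 1

/-- `*`-adjacency: adjacency in the close-packed lattice `ℤ²_cp`. -/
def adjStar (x y : Site) : Prop :=
  x ≠ y ∧ (x.1 - y.1).natAbs ≤ 1 ∧ (x.2 - y.2).natAbs ≤ 1

/-- The four nearest neighbours of a site. -/
def nbrs (x : Site) : Finset Site :=
  {(x.1 + 1, x.2), (x.1 - 1, x.2), (x.1, x.2 + 1), (x.1, x.2 - 1)}

/-- One step of the bootstrap dynamics: a closed site with at least three open
nearest neighbours becomes open; open sites are stable. -/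
def step (ω : Config) : Config := fun x =>
  ω x || decide (3 ≤ ((nbrs x).filter fun y => ω y = true).card)

/-- The configuration after `n` updates (`evolve ω 0 = ω`). -/
def evolve (ω : Config) : ℕ → Config
  | 0 => ω
  | n + 1 => step (evolve ω n)

/-- The site `x` is open in the final (limiting) configuration `ω̄`. -/
def finalOpen (ω : Config) (x : Site) : Prop := ∃ n, evolve ω n x = true

/-- A closed site `x` is stable iff it stays closed at all times, i.e. it is
closed in the final configuration `ω̄`. -/
def stableClosed (ω : Config) (x : Site) : Prop := ∀ n, evolve ω n x = false

/-- A self-avoiding path (with respect to an adjacency relation `A`) all of whose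
sites lie in the set `S`. -/
def IsPathIn (S : Set Site) (A : Site → Site → Prop) (k : ℕ) (π : Fin (k + 1) → Site) : Prop :=
  Function.Injective π ∧ (∀ i : Fin k, A (π i.castSucc) (π i.succ)) ∧ ∀ i, π i ∈ S

/-- `x` and `y` are joined by a path in `S` for the adjacency relation `A`. -/
def ConnIn (S : Set Site) (A : Site → Site → Prop) (x y : Site) : Prop :=
  ∃ (k : ℕ) (π : Fin (k + 1) → Site),
    π 0 = x ∧ π (Fin.last k) = y ∧ IsPathIn S A k π

/-- The plaquette (unit square of four sites) with lower-left corner `c`. -/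
def plaq (c : Site) : Finset Site :=
  {c, (c.1 + 1, c.2), (c.1, c.2 + 1), (c.1 + 1, c.2 + 1)}

/-- A site is protected if it is closed and belongs to a plaquette of closed sites. -/
def IsProtected (ω : Config) (x : Site) : Prop :=
  ω x = false ∧ ∃ c : Site, x ∈ plaq c ∧ ∀ y ∈ plaq c, ω y = false

/-- The partial cluster `C_{(x,x')}`: sites reachable from `x'` by a self-avoiding
`ℤ²`-path whose first step avoids `x` and whose sites all have the state of `x'`. -/
def partialCluster (ω : Config) (x x' : Site) : Set Site :=
  {y | ∃ (k : ℕ) (π : Fin (k + 1) → Site),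
    π 0 = x' ∧ π (Fin.last k) = y ∧ Function.Injective π ∧
    (∀ i : Fin k, adj (π i.castSucc) (π i.succ)) ∧
    (∀ i, ω (π i) = ω x') ∧ ∀ i : Fin (k + 1), (i : ℕ) = 1 → π i ≠ x}

/-- `μ` is the Bernoulli product measure with density `p` of open sites:
all finite-dimensional marginals are products of Bernoulli(`p`) laws. -/
def IsBernoulli (p : ℝ) (μ : Measure Config) : Prop :=
  ∀ (s : Finset Site) (η : Site → Bool),
    μ {ω : Config | ∀ x ∈ s, ω x = η x} =
      ∏ x ∈ s, ENNReal.ofReal (if η x then p else 1 - p)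

/-- `x` belongs to an infinite cluster of `S` for the adjacency relation `A`. -/
def InfClusterIn (S : Set Site) (A : Site → Site → Prop) (x : Site) : Prop :=
  x ∈ S ∧ {y | ConnIn S A x y}.Infinite

/-- The critical probability `p_c` of independent site percolation on `ℤ²`. -/
noncomputable def pc : ℝ :=
  sInf {p : ℝ | p ∈ Set.Icc (0 : ℝ) 1 ∧
    ∀ μ : Measure Config, IsProbabilityMeasure μ → IsBernoulli p μ →
      0 < μ {ω : Config | ∃ x : Site, InfClusterIn {z | ω z = true} adj x}}

/-- A closed horizontal `ℤ²`-crossing (at mesh `δ`) of the rectangle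
`R(b,h) = (-b/2,b/2) × (-h/2,h/2)`: a nearest-neighbour path of sites of `S`
lying in the rectangle and joining its left and right sides. -/
def HCross (S : Set Site) (δ b h : ℝ) : Prop :=
  ∃ (k : ℕ) (π : Fin (k + 1) → Site), IsPathIn S adj k π ∧
    (∀ i, |δ * ((π i).1 : ℝ)| < b / 2 ∧ |δ * ((π i).2 : ℝ)| < h / 2) ∧
    δ * ((π 0).1 : ℝ) ≤ -(b / 2) + δ ∧ b / 2 - δ ≤ δ * ((π (Fin.last k)).1 : ℝ)

/-- An open vertical `*`-crossing (at mesh `δ`) of the rectangle `R(b,h)`: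
a `*`-path of sites of `S` lying in the rectangle and joining its top and
bottom sides. -/
def VCrossStar (S : Set Site) (δ b h : ℝ) : Prop :=
  ∃ (k : ℕ) (π : Fin (k + 1) → Site), IsPathIn S adjStar k π ∧
    (∀ i, |δ * ((π i).1 : ℝ)| < b / 2 ∧ |δ * ((π i).2 : ℝ)| < h / 2) ∧
    h / 2 - δ ≤ δ * ((π 0).2 : ℝ) ∧ δ * ((π (Fin.last k)).2 : ℝ) ≤ -(h / 2) + δ

/-!
A closed site opens only when three of its four neighbours are open, so a set of closed sites in
which every site has two closed neighbours never opens. In particular a closed crossing whose two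
ends are flanked by closed plaquettes survives the dynamics.

Working in lattice units, explore the boxes of half-width `R, R + 2, …, R + 2m`, where
`m = ⌊(b' - b)/(4δ)⌋` and `R` is the half-width of `R(b, h)`. In each box, pick a closed crossing
(cut out of the crossing of `R(b', h)`) and test the two plaquettes flanking its ends. They lie
outside the current box and inside the next one, so whatever the earlier stages revealed, a test
succeeds with probability at least `p_c^8`, and one success gives a stable crossing of `R(b, h)`.
Hence the bad event has probability at most `(1 - p_c^8)^(m+1) ≤ exp(-α (b' - b)/(4δ))`.
-/

lemma adj_comm {x y : Site} : adj x y ↔ adj y x := by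
  unfold adj; omega

lemma mem_nbrs_of_adj {x y : Site} (h : adj x y) : y ∈ nbrs x := by
  obtain ⟨x1, x2⟩ := x; obtain ⟨y1, y2⟩ := y
  unfold adj at h
  simp only [nbrs, Finset.mem_insert, Finset.mem_singleton, Prod.mk.injEq]
  omega

lemma mem_plaq {c w : Site} :
    w ∈ plaq c ↔ (w.1 = c.1 ∨ w.1 = c.1 + 1) ∧ (w.2 = c.2 ∨ w.2 = c.2 + 1) := by
  obtain ⟨w1, w2⟩ := w; obtain ⟨c1, c2⟩ := c
  simp only [plaq, Finset.mem_insert, Finset.mem_singleton, Prod.mk.injEq]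
  omega

/-- A closed site with two closed neighbours can never see three open neighbours. -/
lemma stableClosed_of_forall_exists_two_adj {ω : Config} {D : Set Site}
    (hD : ∀ z ∈ D, ω z = false)
    (h2 : ∀ z ∈ D, ∃ u ∈ D, ∃ v ∈ D, u ≠ v ∧ adj z u ∧ adj z v) :
    ∀ z ∈ D, stableClosed ω z := by
  suffices ∀ n, ∀ z ∈ D, evolve ω n z = false from fun z hz n => this n z hz
  intro n
  induction n with
  | zero => exact hD
  | succ n ih =>
    intro z hz
    obtain ⟨u, hu, v, hv, huv, hzu, hzv⟩ := h2 z hz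
    have hopen :
        (nbrs z).filter (fun y => evolve ω n y = true) ⊆ ((nbrs z).erase u).erase v := by
      intro y hy
      rw [Finset.mem_filter] at hy
      refine Finset.mem_erase.2 ⟨?_, Finset.mem_erase.2 ⟨?_, hy.1⟩⟩ <;> rintro rfl
      · simp [ih y hv] at hy
      · simp [ih y hu] at hy
    have hcard := Finset.card_le_card hopen
    rw [Finset.card_erase_of_mem (Finset.mem_erase.2 ⟨huv.symm, mem_nbrs_of_adj hzv⟩),
      Finset.card_erase_of_mem (mem_nbrs_of_adj hzu)] at hcard
    have h4 : (nbrs z).card ≤ 4 := Finset.card_le_four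
    simp only [evolve, step, ih z hz, Bool.false_or, decide_eq_false_iff_not]
    omega

lemma plaq_exists_two_adj (c : Site) :
    ∀ z ∈ plaq c, ∃ u ∈ plaq c, ∃ v ∈ plaq c, u ≠ v ∧ adj z u ∧ adj z v := by
  obtain ⟨c1, c2⟩ := c
  intro z hz
  simp only [plaq, Finset.mem_insert, Finset.mem_singleton] at hz
  rcases hz with rfl | rfl | rfl | rfl
  · exact ⟨(c1 + 1, c2), by simp [plaq], (c1, c2 + 1), by simp [plaq], by simp, by simp [adj],
      by simp [adj]⟩
  · exact ⟨(c1, c2), by simp [plaq], (c1 + 1, c2 + 1), by simp [plaq], by simp, by simp [adj],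
      by simp [adj]⟩
  · exact ⟨(c1, c2), by simp [plaq], (c1 + 1, c2 + 1), by simp [plaq], by simp, by simp [adj],
      by simp [adj]⟩
  · exact ⟨(c1 + 1, c2), by simp [plaq], (c1, c2 + 1), by simp [plaq], by simp, by simp [adj],
      by simp [adj]⟩

noncomputable def latticeBox (R Y : ℤ) : Finset Site := Finset.Icc (-R) R ×ˢ Finset.Icc (-Y) Y

lemma mem_latticeBox {R Y : ℤ} {z : Site} :
    z ∈ latticeBox R Y ↔ -R ≤ z.1 ∧ z.1 ≤ R ∧ -Y ≤ z.2 ∧ z.2 ≤ Y := by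
  simp [latticeBox, and_assoc]

lemma latticeBox_mono {R R' Y Y' : ℤ} (hR : R ≤ R') (hY : Y ≤ Y') :
    latticeBox R Y ⊆ latticeBox R' Y' := fun z hz => by
  rw [mem_latticeBox] at hz ⊢; omega

/-- `HCross` in lattice units, see `hCross_iff_latticeHCross`. -/
def IsLatticeHCrossing (S : Set Site) (R Y : ℤ) (k : ℕ) (π : Fin (k + 1) → Site) : Prop :=
  IsPathIn S adj k π ∧ (∀ i, π i ∈ latticeBox R Y) ∧ (π 0).1 = -R ∧ (π (Fin.last k)).1 = R

def LatticeHCross (S : Set Site) (R Y : ℤ) : Prop :=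
  ∃ (k : ℕ) (π : Fin (k + 1) → Site), IsLatticeHCrossing S R Y k π

def flank (a e : Site) : Finset Site := plaq (a.1 - 2, a.2) ∪ plaq (e.1 + 1, e.2)

section Stability

variable {R Y : ℤ} {k : ℕ} {π : Fin (k + 1) → Site}

/-- The sites just beyond the two ends stand in for the missing path neighbours there. -/
lemma IsLatticeHCrossing.exists_two_adj {S : Set Site} (hπ : IsLatticeHCrossing S R Y k π)
    (j : Fin (k + 1)) :
    let D : Set Site := Set.range π ∪
      {((π 0).1 - 1, (π 0).2), ((π (Fin.last k)).1 + 1, (π (Fin.last k)).2)}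
    ∃ u ∈ D, ∃ v ∈ D, u ≠ v ∧ adj (π j) u ∧ adj (π j) v := by
  intro D
  obtain ⟨⟨hinj, hadj, -⟩, hbox, h0, hk⟩ := hπ
  have hx : ∀ j, -R ≤ (π j).1 ∧ (π j).1 ≤ R := fun j => by
    have := mem_latticeBox.1 (hbox j); omega
  have hR : 0 ≤ R := by have := hx 0; omega
  have hleft : ((π 0).1 - 1, (π 0).2) ∈ D := .inr (.inl rfl)
  have hright : ((π (Fin.last k)).1 + 1, (π (Fin.last k)).2) ∈ D := .inr (.inr rfl)
  have hne : ∀ u v : Site, u.1 < v.1 → u ≠ v := fun u v h huv => by rw [huv] at h; omega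
  have hpath : ∀ j, π j ∈ D := fun j => .inl ⟨j, rfl⟩
  by_cases hj0 : j = 0
  · subst hj0
    obtain ⟨v, hv, hav, hv1⟩ : ∃ v ∈ D, adj (π 0) v ∧ -R ≤ v.1 := by
      by_cases hk0 : (0 : Fin (k + 1)) = Fin.last k
      · exact ⟨_, hright, by simp [hk0, adj], by omega⟩
      · obtain ⟨i, hi⟩ := Fin.exists_castSucc_eq.2 hk0
        exact ⟨π i.succ, hpath _, by rw [← hi]; exact hadj i, (hx _).1⟩
    exact ⟨_, hleft, v, hv, hne _ _ (by simp only; omega), by simp [adj], hav⟩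
  · obtain ⟨i, rfl⟩ := Fin.exists_succ_eq.2 hj0
    by_cases hik : i.succ = Fin.last k
    · refine ⟨π i.castSucc, hpath _, _, hright, hne _ _ ?_, adj_comm.1 (hadj i), ?_⟩
      · have := (hx i.castSucc).2; simp only; omega
      · simp [← hik, adj]
    · obtain ⟨i', hi'⟩ := Fin.exists_castSucc_eq.2 hik
      refine ⟨π i.castSucc, hpath _, π i'.succ, hpath _, fun h => ?_, adj_comm.1 (hadj i),
        hi' ▸ hadj i'⟩
      have h1 := congrArg Fin.val (hinj h)
      have h2 := congrArg Fin.val hi'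
      simp only [Fin.val_castSucc, Fin.val_succ] at h1 h2
      omega

lemma IsLatticeHCrossing.stableClosed_of_flank {ω : Config}
    (hπ : IsLatticeHCrossing {z | ω z = false} R Y k π)
    (hflank : ∀ z ∈ flank (π 0) (π (Fin.last k)), ω z = false) (i : Fin (k + 1)) :
    stableClosed ω (π i) := by
  set D : Set Site := Set.range π ∪ ↑(flank (π 0) (π (Fin.last k)))
  have hends : ∀ z ∈ ({((π 0).1 - 1, (π 0).2), ((π (Fin.last k)).1 + 1, (π (Fin.last k)).2)} :
      Set Site), z ∈ flank (π 0) (π (Fin.last k)) := by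
    rintro z (rfl | rfl)
    · exact Finset.mem_union_left _ (by rw [mem_plaq]; omega)
    · exact Finset.mem_union_right _ (by rw [mem_plaq]; omega)
  refine stableClosed_of_forall_exists_two_adj (D := D) ?_ ?_ _ (.inl ⟨i, rfl⟩)
  · rintro z (⟨j, rfl⟩ | hz)
    exacts [hπ.1.2.2 j, hflank z hz]
  · rintro z (⟨j, rfl⟩ | hz)
    · obtain ⟨u, hu, v, hv, h⟩ := hπ.exists_two_adj j
      exact ⟨u, hu.imp_right (hends u), v, hv.imp_right (hends v), h⟩
    · obtain ⟨c, hzc, hcD⟩ : ∃ c, z ∈ plaq c ∧ ∀ w ∈ plaq c, w ∈ D := by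
        rcases Finset.mem_union.1 hz with hz | hz
        exacts [⟨_, hz, fun w hw => .inr (Finset.mem_union_left _ hw)⟩,
          ⟨_, hz, fun w hw => .inr (Finset.mem_union_right _ hw)⟩]
      obtain ⟨u, hu, v, hv, h⟩ := plaq_exists_two_adj c z hzc
      exact ⟨u, hcD u hu, v, hcD v hv, h⟩

end Stability

section Scaling

variable {δ : ℝ} (hδ : 0 < δ) (c : ℝ) (x : ℤ)
include hδ

lemma mul_lt_half_iff : δ * x < c / 2 ↔ x ≤ ⌈c / (2 * δ)⌉ - 1 := by
  have hscale : (x : ℝ) < c / (2 * δ) ↔ δ * x < c / 2 := by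
    rw [lt_div_iff₀ (by positivity)]
    constructor <;> intro h <;> linarith
  rw [Int.le_sub_one_iff, Int.lt_ceil, hscale]

lemma half_sub_le_mul_iff : c / 2 - δ ≤ δ * x ↔ ⌈c / (2 * δ)⌉ - 1 ≤ x := by
  have hscale : c / (2 * δ) ≤ ((x + 1 : ℤ) : ℝ) ↔ c / 2 - δ ≤ δ * x := by
    rw [div_le_iff₀ (by positivity)]
    push_cast
    constructor <;> intro h <;> linarith
  rw [← hscale, ← Int.ceil_le]
  omega

lemma abs_mul_lt_half_iff :
    |δ * x| < c / 2 ↔ -(⌈c / (2 * δ)⌉ - 1) ≤ x ∧ x ≤ ⌈c / (2 * δ)⌉ - 1 := by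
  rw [abs_lt, neg_lt, ← mul_neg, ← Int.cast_neg, mul_lt_half_iff hδ, mul_lt_half_iff hδ]
  omega

end Scaling

lemma hCross_iff_latticeHCross {S : Set Site} {δ : ℝ} (hδ : 0 < δ) (b h : ℝ) :
    HCross S δ b h ↔ LatticeHCross S (⌈b / (2 * δ)⌉ - 1) (⌈h / (2 * δ)⌉ - 1) := by
  have hbox : ∀ z : Site, (|δ * (z.1 : ℝ)| < b / 2 ∧ |δ * (z.2 : ℝ)| < h / 2) ↔
      z ∈ latticeBox (⌈b / (2 * δ)⌉ - 1) (⌈h / (2 * δ)⌉ - 1) := fun z => by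
    rw [abs_mul_lt_half_iff hδ, abs_mul_lt_half_iff hδ, mem_latticeBox]
    tauto
  have hstart : ∀ x : ℤ, δ * x ≤ -(b / 2) + δ ↔ ⌈b / (2 * δ)⌉ - 1 ≤ -x := fun x => by
    rw [← half_sub_le_mul_iff hδ, Int.cast_neg]
    constructor <;> intro h <;> linarith
  simp only [HCross, LatticeHCross, IsLatticeHCrossing, hbox, hstart, half_sub_le_mul_iff hδ]
  refine exists₂_congr fun k π => and_congr_right fun _ => and_congr_right fun hπ => ?_
  have h0 := mem_latticeBox.1 (hπ 0)
  have hk := mem_latticeBox.1 (hπ (Fin.last k))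
  omega

/-- Take the first visit to `[R, ∞)` and the last visit to `(-∞, -R]` before it. -/
lemma exists_stretch_of_abs_sub_le_one {f : ℕ → ℤ} (hf : ∀ n, |f (n + 1) - f n| ≤ 1)
    {R : ℤ} (hR : 0 ≤ R) {k : ℕ} (h0 : f 0 ≤ -R) (hk : R ≤ f k) :
    ∃ i j, i ≤ j ∧ j ≤ k ∧ f i = -R ∧ f j = R ∧ ∀ n, i ≤ n → n ≤ j → -R ≤ f n ∧ f n ≤ R := by
  classical
  have hstep : ∀ n, f (n + 1) ≤ f n + 1 ∧ f n ≤ f (n + 1) + 1 := fun n => by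
    have := abs_le.1 (hf n); omega
  have hex : ∃ n, R ≤ f n := ⟨k, hk⟩
  set j := Nat.find hex
  set i := Nat.findGreatest (fun n => f n ≤ -R) j
  have hbelow : ∀ n < j, f n < R := fun n hn => not_le.1 (Nat.find_min hex hn)
  have habove : ∀ n, i < n → n ≤ j → -R < f n := fun n h1 h2 =>
    not_le.1 (Nat.findGreatest_is_greatest h1 h2)
  have hij : i ≤ j := Nat.findGreatest_le j
  have hi : f i ≤ -R := Nat.findGreatest_spec (P := fun n => f n ≤ -R) (Nat.zero_le j) h0
  have hj : f j = R := by
    have hjR : R ≤ f j := Nat.find_spec hex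
    rcases Nat.eq_zero_or_pos j with hj0 | hj0
    · rw [hj0] at hjR ⊢; omega
    · have h1 := hbelow (j - 1) (by omega)
      have h2 := hstep (j - 1)
      rw [Nat.sub_add_cancel hj0] at h2
      omega
  have hi' : f i = -R := by
    rcases Nat.eq_or_lt_of_le hij with hij | hij
    · rw [hij] at hi ⊢; omega
    · have := habove (i + 1) (by omega) hij
      have := hstep i
      omega
  refine ⟨i, j, hij, Nat.find_min' hex hk, hi', hj, fun n h1 h2 => ⟨?_, ?_⟩⟩
  · rcases Nat.eq_or_lt_of_le h1 with rfl | h1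
    · omega
    · exact (habove n h1 h2).le
  · rcases Nat.eq_or_lt_of_le h2 with rfl | h2
    · omega
    · exact (hbelow n h2).le

lemma LatticeHCross.mono_width {S : Set Site} {R R' Y : ℤ} (h : LatticeHCross S R' Y)
    (hR : 0 ≤ R) (hRR' : R ≤ R') : LatticeHCross S R Y := by
  obtain ⟨k, π, ⟨hinj, hadj, hS⟩, hbox, h0, hk⟩ := h
  set f : ℕ → ℤ := fun n => (π ⟨min n k, by omega⟩).1
  have hf : ∀ n, |f (n + 1) - f n| ≤ 1 := fun n => by
    rcases lt_or_ge n k with hn | hn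
    · have hn' := hadj ⟨n, hn⟩
      simp only [adj, Fin.castSucc_mk, Fin.succ_mk] at hn'
      simp only [f, min_eq_left hn.le, min_eq_left (Nat.succ_le_of_lt hn), Int.abs_eq_natAbs,
        Nat.succ_eq_add_one]
      omega
    · simp [f, min_eq_right hn, min_eq_right (Nat.le_succ_of_le hn)]
  obtain ⟨i, j, hij, hjk, hi, hj, hmid⟩ :=
    exists_stretch_of_abs_sub_le_one hf hR (k := k) (by simp [f, h0]; omega)
      (by simp only [f, min_self]; exact hRR'.trans hk.ge)
  have hidx : ∀ t : Fin (j - i + 1), i + t < k + 1 := fun t => by omega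
  have hf_eq : ∀ t : Fin (j - i + 1), f (i + t) = (π ⟨i + t, hidx t⟩).1 := fun t => by
    simp only [f, min_eq_left (show i + (t : ℕ) ≤ k by omega)]
  refine ⟨j - i, fun t => π ⟨i + t, hidx t⟩, ⟨fun s t hst => ?_, fun t => ?_, fun t => hS _⟩,
    fun t => ?_, ?_, ?_⟩
  · have := congrArg Fin.val (hinj hst)
    simp only at this
    exact Fin.ext (by omega)
  · have := hadj ⟨i + t, by omega⟩
    simpa [Fin.castSucc_mk, Fin.succ_mk, add_assoc] using this
  · have hy := mem_latticeBox.1 (hbox ⟨i + t, hidx t⟩)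
    have hx := hmid (i + t) (by omega) (by omega)
    rw [hf_eq] at hx
    exact mem_latticeBox.2 ⟨hx.1, hx.2, hy.2.2⟩
  · rw [← hf_eq]
    simpa using hi
  · rw [← hf_eq]
    simpa [Nat.add_sub_cancel' hij] using hj

lemma card_flank_le (a e : Site) : (flank a e).card ≤ 8 :=
  (Finset.card_union_le _ _).trans (add_le_add Finset.card_le_four Finset.card_le_four)

section SomeFlank

variable {S : Set Site} {R Y : ℤ}

lemma IsLatticeHCrossing.mono {T : Set Site} {k : ℕ} {π : Fin (k + 1) → Site}
    (hπ : IsLatticeHCrossing S R Y k π) (hST : S ⊆ T) : IsLatticeHCrossing T R Y k π :=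
  ⟨⟨hπ.1.1, hπ.1.2.1, fun i => hST (hπ.1.2.2 i)⟩, hπ.2⟩

lemma LatticeHCross.inter_latticeBox (h : LatticeHCross S R Y) :
    LatticeHCross (S ∩ latticeBox R Y) R Y := by
  obtain ⟨k, π, ⟨hinj, hadj, hS⟩, hbox, hends⟩ := h
  exact ⟨k, π, ⟨hinj, hadj, fun i => ⟨hS i, hbox i⟩⟩, hbox, hends⟩

lemma IsLatticeHCrossing.mem_flank {k : ℕ} {π : Fin (k + 1) → Site}
    (hπ : IsLatticeHCrossing S R Y k π) {z : Site} (hz : z ∈ flank (π 0) (π (Fin.last k))) :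
    (R + 1 ≤ z.1 ∧ z.1 ≤ R + 2 ∨ -(R + 2) ≤ z.1 ∧ z.1 ≤ -(R + 1)) ∧ -Y ≤ z.2 ∧ z.2 ≤ Y + 1 := by
  obtain ⟨-, hbox, h0, hk⟩ := hπ
  have ha := mem_latticeBox.1 (hbox 0)
  have he := mem_latticeBox.1 (hbox (Fin.last k))
  rcases Finset.mem_union.1 hz with hz | hz <;> rw [mem_plaq] at hz <;> omega

open Classical in
noncomputable def someFlank (S : Set Site) (R Y : ℤ) : Finset Site :=
  if h : LatticeHCross S R Y then
    flank (h.choose_spec.choose 0) (h.choose_spec.choose (Fin.last h.choose))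
  else ∅

lemma someFlank_spec (h : LatticeHCross S R Y) :
    ∃ (k : ℕ) (π : Fin (k + 1) → Site), IsLatticeHCrossing S R Y k π ∧
      someFlank S R Y = flank (π 0) (π (Fin.last k)) :=
  ⟨_, _, h.choose_spec.choose_spec, dif_pos h⟩

lemma mem_someFlank {z : Site} (hz : z ∈ someFlank S R Y) :
    (R + 1 ≤ z.1 ∧ z.1 ≤ R + 2 ∨ -(R + 2) ≤ z.1 ∧ z.1 ≤ -(R + 1)) ∧ -Y ≤ z.2 ∧ z.2 ≤ Y + 1 := by
  by_cases h : LatticeHCross S R Y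
  · obtain ⟨k, π, hπ, heq⟩ := someFlank_spec h
    exact hπ.mem_flank (heq ▸ hz)
  · simp [someFlank, h] at hz

lemma card_someFlank_le : (someFlank S R Y).card ≤ 8 := by
  by_cases h : LatticeHCross S R Y
  · obtain ⟨k, π, -, heq⟩ := someFlank_spec h
    exact heq ▸ card_flank_le _ _
  · simp [someFlank, h]

end SomeFlank

lemma measurableSet_cylinder (s : Finset Site) (η : Config) :
    MeasurableSet {ω : Config | ∀ x ∈ s, ω x = η x} := by
  simp only [Set.ofPred_forall]
  exact Finset.measurableSet_biInter s fun x _ =>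
    measurableSet_eq_fun (measurable_pi_apply x) measurable_const

namespace IsBernoulli

variable {p : ℝ} {μ : Measure Config}

lemma measure_inter_cylinder_of_disjoint (hμ : IsBernoulli p μ) {s t : Finset Site}
    (hst : Disjoint s t) (η ξ : Config) :
    μ ({ω | ∀ x ∈ s, ω x = η x} ∩ {ω | ∀ x ∈ t, ω x = ξ x}) =
      μ {ω | ∀ x ∈ s, ω x = η x} * μ {ω | ∀ x ∈ t, ω x = ξ x} := by
  classical
  set ζ : Config := fun x => if x ∈ s then η x else ξ x
  have hζs : ∀ x ∈ s, ζ x = η x := fun x hx => if_pos hx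
  have hζt : ∀ x ∈ t, ζ x = ξ x := fun x hx => if_neg (Finset.disjoint_right.1 hst hx)
  have hset : {ω : Config | ∀ x ∈ s, ω x = η x} ∩ {ω | ∀ x ∈ t, ω x = ξ x} =
      {ω | ∀ x ∈ s ∪ t, ω x = ζ x} := by
    ext ω
    simp only [Set.mem_inter_iff, Set.mem_ofPred_eq, Finset.mem_union]
    constructor
    · rintro ⟨hs, ht⟩ x (hx | hx)
      · rw [hs x hx, hζs x hx]
      · rw [ht x hx, hζt x hx]
    · intro h
      exact ⟨fun x hx => (h x (.inl hx)).trans (hζs x hx),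
        fun x hx => (h x (.inr hx)).trans (hζt x hx)⟩
  rw [hset, hμ, hμ, hμ, Finset.prod_union hst]
  congr 1
  · exact Finset.prod_congr rfl fun x hx => by rw [hζs x hx]
  · exact Finset.prod_congr rfl fun x hx => by rw [hζt x hx]

lemma measure_forall_closed (hμ : IsBernoulli p μ) (t : Finset Site) :
    μ {ω | ∀ x ∈ t, ω x = false} = ENNReal.ofReal (1 - p) ^ t.card := by
  simpa using hμ t fun _ => false

lemma ofReal_one_sub_le_one [IsProbabilityMeasure μ] (hμ : IsBernoulli p μ) :
    ENNReal.ofReal (1 - p) ≤ 1 := by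
  simpa using (measure_forall_closed hμ {(0, 0)}).symm.trans_le prob_le_one

lemma measure_cylinder_inter_exists_open_le [IsProbabilityMeasure μ] (hμ : IsBernoulli p μ)
    {s t : Finset Site} (hst : Disjoint s t) {n : ℕ} (htn : t.card ≤ n) (η : Config) :
    μ ({ω | ∀ x ∈ s, ω x = η x} ∩ {ω | ∃ x ∈ t, ω x = true}) ≤
      (1 - ENNReal.ofReal (1 - p) ^ n) * μ {ω | ∀ x ∈ s, ω x = η x} := by
  set C := {ω : Config | ∀ x ∈ s, ω x = η x}
  set q := ENNReal.ofReal (1 - p)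
  have hdiff : C ∩ {ω | ∃ x ∈ t, ω x = true} = C \ {ω | ∀ x ∈ t, ω x = false} := by
    ext ω; simp
  have hsplit := measure_inter_add_sdiff C (measurableSet_cylinder t fun _ => false) (μ := μ)
  rw [← hdiff, measure_inter_cylinder_of_disjoint hμ hst, measure_forall_closed hμ] at hsplit
  have hq : q ^ n ≤ q ^ t.card := pow_le_pow_of_le_one zero_le (ofReal_one_sub_le_one hμ) htn
  calc μ (C ∩ {ω | ∃ x ∈ t, ω x = true})
      = μ C * (1 - q ^ t.card) := by
        rw [ENNReal.mul_sub fun _ _ => measure_ne_top μ C, mul_one]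
        exact ENNReal.eq_sub_of_add_eq (ENNReal.mul_ne_top (measure_ne_top μ C)
          (ENNReal.pow_ne_top ENNReal.ofReal_ne_top)) (by rwa [add_comm])
    _ ≤ (1 - q ^ n) * μ C := by rw [mul_comm]; gcongr

/-- On each fibre of the configuration on `s`, both `E` and the test set are fixed, so
`measure_cylinder_inter_exists_open_le` applies fibrewise. -/
lemma measure_inter_exists_open_le [IsProbabilityMeasure μ] (hμ : IsBernoulli p μ)
    {s : Finset Site} {E : Set Config} (hE : DependsOn (· ∈ E) (s : Set Site))
    {T : Config → Finset Site} (hT : DependsOn T (s : Set Site)) (hTs : ∀ ω, Disjoint s (T ω))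
    {n : ℕ} (hTn : ∀ ω, (T ω).card ≤ n) :
    μ (E ∩ {ω | ∃ x ∈ T ω, ω x = true}) ≤ (1 - ENNReal.ofReal (1 - p) ^ n) * μ E := by
  classical
  set fib : (↥s → Bool) → Set Config := fun g => (s.restrict : Config → ↥s → Bool) ⁻¹' {g}
  have hfib : ∀ g, MeasurableSet (fib g) := fun g =>
    Finset.measurable_restrict s (measurableSet_singleton g)
  have hsum : ∀ A : Set Config, μ A = ∑ g, μ (fib g ∩ A) := fun A => by
    simpa [fib, Measure.restrict_apply (hfib _)] using
      (sum_measure_preimage_singleton (μ := μ.restrict A) Finset.univ fun g _ => hfib g).symm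
  rw [hsum, hsum E, Finset.mul_sum]
  refine Finset.sum_le_sum fun g _ => ?_
  by_cases hg : (fib g ∩ E).Nonempty
  · obtain ⟨ω₀, rfl, hω₀E⟩ := hg
    have hcyl : fib (s.restrict ω₀) = {ω : Config | ∀ x ∈ s, ω x = ω₀ x} := by
      ext ω
      simp [fib, funext_iff]
    have hagree : ∀ ω ∈ fib (s.restrict ω₀), ∀ x ∈ (s : Set Site), ω₀ x = ω x := by
      intro ω hω x hx
      rw [hcyl] at hω
      exact (hω x hx).symm
    have hEg : fib (s.restrict ω₀) ∩ E = fib (s.restrict ω₀) :=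
      Set.inter_eq_left.2 fun ω hω => (hE (hagree ω hω)).mp hω₀E
    have hTg : fib (s.restrict ω₀) ∩ (E ∩ {ω | ∃ x ∈ T ω, ω x = true}) =
        fib (s.restrict ω₀) ∩ {ω | ∃ x ∈ T ω₀, ω x = true} := by
      rw [← Set.inter_assoc, hEg]
      ext ω
      simp only [Set.mem_inter_iff, Set.mem_ofPred_eq, and_congr_right_iff]
      intro hω
      rw [hT (hagree ω hω)]
    rw [hTg, hEg, hcyl]
    exact measure_cylinder_inter_exists_open_le hμ (hTs ω₀) (hTn ω₀) ω₀
  · have hempty : fib g ∩ E = ∅ := Set.not_nonempty_iff_eq_empty.1 hg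
    rw [hempty, ← Set.inter_assoc, hempty]
    simp

lemma measure_forall_exists_open_le [IsProbabilityMeasure μ] (hμ : IsBernoulli p μ)
    {F : ℕ → Finset Site} (hF : Monotone F) {T : ℕ → Config → Finset Site}
    (hT : ∀ j, DependsOn (T j) (F j : Set Site)) (hTF : ∀ j ω, Disjoint (F j) (T j ω))
    (hTF' : ∀ j ω, T j ω ⊆ F (j + 1)) {n : ℕ} (hTn : ∀ j ω, (T j ω).card ≤ n) (m : ℕ) :
    μ {ω | ∀ j < m, ∃ x ∈ T j ω, ω x = true} ≤ (1 - ENNReal.ofReal (1 - p) ^ n) ^ m := by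
  induction m with
  | zero => simp
  | succ m ih =>
    have hsplit : {ω : Config | ∀ j < m + 1, ∃ x ∈ T j ω, ω x = true} =
        {ω | ∀ j < m, ∃ x ∈ T j ω, ω x = true} ∩ {ω | ∃ x ∈ T m ω, ω x = true} := by
      ext ω
      simp only [Set.mem_inter_iff, Set.mem_ofPred_eq, Nat.lt_succ_iff_lt_or_eq, or_imp,
        forall_and, forall_eq]
    have hdep : DependsOn (· ∈ {ω : Config | ∀ j < m, ∃ x ∈ T j ω, ω x = true})
        (F m : Set Site) := by
      intro ω ω' hωω'
      have hsub : ∀ j < m, F (j + 1) ⊆ F m := fun j hj => hF hj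
      simp only [Set.mem_ofPred_eq, eq_iff_iff]
      refine forall₂_congr fun j hj => ?_
      rw [hT j fun x hx => hωω' x (hF hj.le hx)]
      refine exists_congr fun x => and_congr_right fun hx => ?_
      rw [hωω' x (hsub j hj (hTF' j ω' hx))]
    rw [hsplit, pow_succ, mul_comm]
    exact (measure_inter_exists_open_le hμ hdep (hT m) (hTF m) (hTn m)).trans
      (mul_le_mul_right ih _)

end IsBernoulli

lemma IsLatticeHCrossing.latticeHCross_stableClosed {ω : Config} {R Y : ℤ} {k : ℕ}
    {π : Fin (k + 1) → Site} (hπ : IsLatticeHCrossing {z | ω z = false} R Y k π)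
    (hflank : ∀ z ∈ flank (π 0) (π (Fin.last k)), ω z = false) :
    LatticeHCross {z | stableClosed ω z} R Y :=
  ⟨k, π, ⟨hπ.1.1, hπ.1.2.1, hπ.stableClosed_of_flank hflank⟩, hπ.2⟩

lemma IsBernoulli.measure_latticeHCross_not_stable_le {p : ℝ} {μ : Measure Config}
    [IsProbabilityMeasure μ] (hμ : IsBernoulli p μ) {R : ℤ} (hR : 0 ≤ R) (Y : ℤ) (m : ℕ) :
    μ {ω | LatticeHCross {z | ω z = false} (R + 2 * m) Y ∧
        ¬ LatticeHCross {z | stableClosed ω z} R Y} ≤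
      (1 - ENNReal.ofReal (1 - p) ^ 8) ^ (m + 1) := by
  set F : ℕ → Finset Site := fun j => latticeBox (R + 2 * j) (Y + 1)
  set T : ℕ → Config → Finset Site := fun j ω =>
    someFlank ({z | ω z = false} ∩ latticeBox (R + 2 * j) Y) (R + 2 * j) Y
  have hF : Monotone F := fun i j hij => latticeBox_mono (by omega) le_rfl
  have hT : ∀ j, DependsOn (T j) (F j : Set Site) := fun j ω ω' h => by
    have hS : {z | ω z = false} ∩ ↑(latticeBox (R + 2 * j) Y) =
        {z | ω' z = false} ∩ ↑(latticeBox (R + 2 * j) Y) := by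
      ext z
      simp only [Set.mem_inter_iff, Set.mem_ofPred_eq, and_congr_left_iff]
      intro hz
      rw [h z (latticeBox_mono le_rfl (by omega) hz)]
    simp only [T, hS]
  have hTF : ∀ j ω, Disjoint (F j) (T j ω) := fun j ω =>
    Finset.disjoint_left.2 fun z hzF hzT => by
    have := mem_someFlank hzT
    have := mem_latticeBox.1 hzF
    omega
  have hTF' : ∀ j ω, T j ω ⊆ F (j + 1) := fun j ω z hz => by
    have := mem_someFlank hz
    rw [mem_latticeBox]
    push_cast
    omega
  refine (measure_mono ?_).trans (hμ.measure_forall_exists_open_le hF hT hTF hTF'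
    (fun _ _ => card_someFlank_le) (m + 1))
  rintro ω ⟨hcross, hnot⟩ j hj
  obtain ⟨k, π, hπ, hflank⟩ :=
    someFlank_spec (hcross.mono_width (R := R + 2 * j) (by omega) (by omega)).inter_latticeBox
  by_contra! hclosed
  have hstable := (hπ.mono Set.inter_subset_left).latticeHCross_stableClosed fun z hz => by
    simpa using hclosed z (by rwa [← hflank] at hz)
  exact hnot (hstable.mono_width hR (by omega))

lemma IsBernoulli.measure_hCross_not_stable_le {p : ℝ} {μ : Measure Config}
    [IsProbabilityMeasure μ] (hμ : IsBernoulli p μ) {δ b b' : ℝ} (hδ : 0 < δ) (hb : 0 < b)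
    (h : ℝ) {m : ℕ} (hm : b + 4 * δ * m ≤ b') :
    μ {ω | HCross {z | ω z = false} δ b' h ∧ ¬ HCross {z | stableClosed ω z} δ b h} ≤
      (1 - ENNReal.ofReal (1 - p) ^ 8) ^ (m + 1) := by
  have hR : 0 ≤ ⌈b / (2 * δ)⌉ - 1 := by
    have : 0 < ⌈b / (2 * δ)⌉ := Int.ceil_pos.2 (by positivity)
    omega
  have hR' : ⌈b / (2 * δ)⌉ - 1 + 2 * m ≤ ⌈b' / (2 * δ)⌉ - 1 := by
    have hdiv : b / (2 * δ) + (2 * m : ℕ) ≤ b' / (2 * δ) := by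
      rw [div_add' _ _ _ (by positivity), div_le_div_iff_of_pos_right (by positivity)]
      push_cast
      linarith
    have := Int.ceil_mono hdiv
    rw [Int.ceil_add_natCast] at this
    push_cast at this
    omega
  refine (measure_mono fun ω hω => ?_).trans
    (hμ.measure_latticeHCross_not_stable_le hR (⌈h / (2 * δ)⌉ - 1) m)
  simp only [Set.mem_ofPred_eq, hCross_iff_latticeHCross hδ] at hω ⊢
  exact ⟨hω.1.mono_width (by omega) hR', hω.2⟩

lemma IsBernoulli.measure_exists_closed_eq_zero {p : ℝ} {μ : Measure Config}
    (hμ : IsBernoulli p μ) (hp : 1 ≤ p) : μ {ω | ∃ z, ω z = false} = 0 := by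
  rw [Set.ofPred_exists]
  refine measure_iUnion_null fun z => ?_
  simpa [ENNReal.ofReal_eq_zero.2 (sub_nonpos.2 hp)] using hμ {z} fun _ => false

lemma pow_floor_add_one_le_exp {β : ℝ} (hβ0 : 0 < β) (hβ1 : β ≤ 1) (L : ℝ) :
    β ^ (⌊L⌋₊ + 1) ≤ Real.exp (Real.log β * L) :=
  calc β ^ (⌊L⌋₊ + 1) = Real.exp ((⌊L⌋₊ + 1 : ℕ) * Real.log β) := by
        rw [Real.exp_nat_mul, Real.exp_log hβ0]
    _ ≤ Real.exp (Real.log β * L) := by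
        refine Real.exp_le_exp.2 ?_
        push_cast
        nlinarith [Nat.lt_floor_add_one L, Real.log_nonpos hβ0.le hβ1]

lemma IsBernoulli.exists_measure_hCross_not_stable_le {p : ℝ} {μ : Measure Config}
    [IsProbabilityMeasure μ] (hμ : IsBernoulli p μ) :
    ∃ β : ℝ, 0 < β ∧ β < 1 ∧ ∀ {δ b b' : ℝ}, 0 < δ → 0 < b → b < b' → ∀ h : ℝ,
      μ {ω | HCross {z | ω z = false} δ b' h ∧ ¬ HCross {z | stableClosed ω z} δ b h}
        ≤ ENNReal.ofReal β ^ (⌊(b' - b) / (4 * δ)⌋₊ + 1) := by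
  rcases le_or_gt 1 p with hp | hp
  · refine ⟨1 / 2, by norm_num, by norm_num, fun _ _ _ h => ?_⟩
    refine (measure_mono_null (fun ω hω => ?_) (hμ.measure_exists_closed_eq_zero hp)).trans_le
      zero_le
    obtain ⟨k, π, ⟨-, -, hS⟩, -⟩ := hω.1
    exact ⟨π 0, hS 0⟩
  · have hq : 0 < 1 - p := sub_pos.2 hp
    refine ⟨max (1 - (1 - p) ^ 8) (1 / 2), by positivity,
      max_lt (by linarith [pow_pos hq 8]) (by norm_num), ?_⟩
    intro δ b b' hδ hb hbb' h
    refine (hμ.measure_hCross_not_stable_le hδ hb h ?_).trans (pow_le_pow_left₀ zero_le ?_ _)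
    · have := Nat.floor_le (div_nonneg (sub_nonneg.2 hbb'.le) (by positivity : (0 : ℝ) ≤ 4 * δ))
      rw [le_div_iff₀ (by positivity)] at this
      linarith
    · rw [← ENNReal.ofReal_pow hq.le, ← ENNReal.ofReal_one, ← ENNReal.ofReal_sub _ (by positivity)]
      exact ENNReal.ofReal_le_ofReal (le_max_left _ _)

/-- At `p = p_c^*`: there are constants `α > 0` and `K` such that, for any
`0 < b < b'` and any mesh `δ > 0`, if at time `0` there is a closed horizontal
`ℤ²`-crossing of `R(b', h+δ)` then, except on an event of probability at most
`2K exp(-α (b'-b)/(4δ))`, the final bootstrapped configuration contains a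
closed horizontal `ℤ²`-crossing of `R(b, h+δ)`. -/
theorem closed_crossing_survives_bootstrap
    (μ : Measure Config) [IsProbabilityMeasure μ] (hμ : IsBernoulli (1 - pc) μ) :
    ∃ (α K : ℝ), 0 < α ∧ 0 < K ∧
      ∀ (δ b b' h : ℝ), 0 < δ → 0 < b → b < b' → 0 < h →
        μ {ω : Config | HCross {z | ω z = false} δ b' (h + δ)
            ∧ ¬ HCross {z | stableClosed ω z} δ b (h + δ)}
          ≤ ENNReal.ofReal (2 * K * Real.exp (-α * (b' - b) / (4 * δ))) := by
  obtain ⟨β, hβ0, hβ1, hβ⟩ := hμ.exists_measure_hCross_not_stable_le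
  refine ⟨-Real.log β, 1 / 2, neg_pos.2 (Real.log_neg hβ0 hβ1), by norm_num,
    fun δ b b' h hδ hb hbb' _ => (hβ hδ hb hbb' (h + δ)).trans ?_⟩
  rw [← ENNReal.ofReal_pow hβ0.le]
  refine ENNReal.ofReal_le_ofReal ((pow_floor_add_one_le_exp hβ0 hβ1.le _).trans_eq ?_)
  ring_nf
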